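/- Let a be a complex number such that neither 3a nor 3a + 1/2 is a nonpositive integer. Then ₃F₂(2a, 2a − 1/3, 2a + 1/3; 3a, 3a + 1/2; 1) = (3/2)^{6a−1}, where (3/2)^{6a−1} denotes the principal complex power. (The parametric excess equals 1/2, so the series converges.) -/

import Mathlib

/-!
Put `b = 6a - 1`. Gauss's multiplication formula for Pochhammer symbols turns the `k`-th term of
the series into `R_k(b) (4/27)^k`, where `R_k(x) = x/(x+3k) · binom(x+3k, k)` are the Raney
numbers. They satisfy the Rothe–Hagen convolution `R_n(x + y) = ∑_{i+j=n} R_i(x) R_j(y)`, so the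
entire function `F(x) = ∑ R_k(x) (4/27)^k` (convergent for every `x` by Raabe's test, the terms
decaying like `k^(-3/2)`) satisfies `F(x + y) = F(x) F(y)`. Since `R_{k+1}(1) = R_k(3)`,
`F(1) = 1 + (4/27) F(1)^3`, whose only positive root is the double root `3/2`. As `F` is real and
positive on `[0, ∞)`, `F(1/n) = (3/2)^(1/n)`, and the identity theorem gives `F(x) = (3/2)^x`.
-/

open Complex Finset

/-- The generalized hypergeometric series ₃F₂(a₁,a₂,a₃; b₁,b₂; 1) over ℂ. -/
noncomputable def hyp3F2 (a₁ a₂ a₃ b₁ b₂ : ℂ) : ℂ :=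
  ∑' k : ℕ,
    ((ascPochhammer ℂ k).eval a₁ * (ascPochhammer ℂ k).eval a₂ * (ascPochhammer ℂ k).eval a₃) /
    ((ascPochhammer ℂ k).eval b₁ * (ascPochhammer ℂ k).eval b₂ * (Nat.factorial k : ℂ))

/-- `x` is not a nonpositive integer (equivalently, not a pole of Γ). -/
def NotNonposInt (x : ℂ) : Prop := ∀ m : ℕ, x ≠ -(m : ℂ)

open Polynomial Filter Topology

section Pochhammer

variable {R : Type*} [CommSemiring R]

theorem ascPochhammer_eval_add (n m : ℕ) (x : R) :
    (ascPochhammer R (n + m)).eval x =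
      (ascPochhammer R n).eval x * (ascPochhammer R m).eval (x + n) := by
  simp [← ascPochhammer_mul, eval_comp]

theorem ascPochhammer_succ_eval_left (n : ℕ) (x : R) :
    (ascPochhammer R (n + 1)).eval x = x * (ascPochhammer R n).eval (x + 1) := by
  simp [ascPochhammer_succ_left, eval_comp]

theorem ascPochhammer_eval_eq_prod_range (n : ℕ) (x : R) :
    (ascPochhammer R n).eval x = ∏ i ∈ range n, (x + i) := by
  induction n with
  | zero => simp
  | succ n ih => rw [ascPochhammer_succ_eval, ih, prod_range_succ]

end Pochhammer

theorem ascPochhammer_eval_natCast_mul {K : Type*} [Field K] [CharZero K] (m k : ℕ) (x : K) :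
    (ascPochhammer K (m * k)).eval (m * x) =
      m ^ (m * k) * ∏ i ∈ range m, (ascPochhammer K k).eval (x + i / m) := by
  rcases eq_or_ne m 0 with rfl | hm
  · simp
  have hm' : (m : K) ≠ 0 := Nat.cast_ne_zero.mpr hm
  induction k with
  | zero => simp
  | succ k ih =>
    have hblock : ∏ i ∈ range m, (m * x + (m * k : ℕ) + i) =
        m ^ m * ∏ i ∈ range m, (x + i / m + k) := by
      rw [pow_eq_prod_const, ← prod_mul_distrib]
      refine prod_congr rfl fun i _ => ?_
      field_simp
      push_cast
      ring
    rw [Nat.mul_succ, ascPochhammer_eval_add, ih, ascPochhammer_eval_eq_prod_range, hblock]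
    simp only [ascPochhammer_succ_eval, prod_mul_distrib]
    ring

theorem norm_ascPochhammer_eval_le {𝕜 : Type*} [RCLike 𝕜] (n : ℕ) {z : 𝕜} {r : ℝ}
    (hz : ‖z‖ ≤ r) : ‖(ascPochhammer 𝕜 n).eval z‖ ≤ (ascPochhammer ℝ n).eval r := by
  induction n with
  | zero => simp
  | succ n ih =>
    simp only [ascPochhammer_succ_eval, norm_mul]
    have hzn : ‖z + n‖ ≤ r + n := (norm_add_le _ _).trans (by rw [RCLike.norm_natCast]; linarith)
    exact mul_le_mul ih hzn (norm_nonneg _) ((norm_nonneg _).trans ih)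

section Raney

variable {K : Type*} [Field K]

/-- The Raney numbers `R_k(x) = x / (x + 3k) · binom(x + 3k, k)`, written without the division. -/
noncomputable def raney : ℕ → K → K
  | 0, _ => 1
  | k + 1, x => x * (ascPochhammer K k).eval (x + (2 * k + 3 : ℕ)) / (k + 1).factorial

@[simp] theorem raney_zero (x : K) : raney 0 x = 1 := rfl

theorem raney_succ (k : ℕ) (x : K) :
    raney (k + 1) x = x * (ascPochhammer K k).eval (x + (2 * k + 3 : ℕ)) / (k + 1).factorial :=
  rfl

@[simp] theorem raney_succ_zero (k : ℕ) : raney (k + 1) (0 : K) = 0 := by simp [raney_succ]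

theorem exists_eval_eq_raney (k : ℕ) : ∃ p : K[X], ∀ x, p.eval x = raney k x := by
  cases k with
  | zero => exact ⟨1, by simp⟩
  | succ k =>
    refine ⟨C ((k + 1).factorial : K)⁻¹ * X *
      (ascPochhammer K k).comp (X + C ((2 * k + 3 : ℕ) : K)), fun x => ?_⟩
    simp only [raney_succ, eval_mul, eval_C, eval_X, eval_comp, eval_add]
    ring

theorem map_raney {L : Type*} [Field L] (f : K →+* L) (k : ℕ) (x : K) :
    f (raney k x) = raney k (f x) := by
  cases k with
  | zero => simp
  | succ k =>
    simp only [raney_succ, map_div₀, map_mul, map_add, map_natCast, ← eval₂_at_apply,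
      ← ascPochhammer_eval₂]

variable [CharZero K]

theorem raney_pascal (k : ℕ) (x : K) :
    raney (k + 1) (x + 1) = raney (k + 1) x + raney k (x + 3) := by
  cases k with
  | zero => simp [raney_succ]
  | succ k =>
    set y := x + ((2 * (k + 1) + 3 : ℕ) : K)
    have e1 : x + 1 + ((2 * (k + 1) + 3 : ℕ) : K) = y + 1 := by ring
    have e2 : x + 3 + ((2 * k + 3 : ℕ) : K) = y + 1 := by simp only [y]; push_cast; ring
    rw [raney_succ, raney_succ, raney_succ, e1, e2, ascPochhammer_succ_eval,
      ascPochhammer_succ_eval_left, Nat.factorial_succ (k + 1)]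
    have hf : ((k + 1).factorial : K) ≠ 0 := Nat.cast_ne_zero.mpr (Nat.factorial_ne_zero _)
    have hk : ((k + 1 + 1 : ℕ) : K) ≠ 0 := Nat.cast_ne_zero.mpr (Nat.succ_ne_zero _)
    simp only [y]
    push_cast at hk ⊢
    field_simp
    ring

theorem raney_mul_ascPochhammer (k : ℕ) (x : K) :
    raney k x * (ascPochhammer K (2 * k)).eval (x + 1) * k.factorial =
      (ascPochhammer K (3 * k)).eval x := by
  cases k with
  | zero => simp
  | succ k =>
    rw [show 3 * (k + 1) = 1 + 2 * (k + 1) + k by ring, ascPochhammer_eval_add,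
      ascPochhammer_eval_add, raney_succ, ascPochhammer_one, eval_X]
    have hf : ((k + 1).factorial : K) ≠ 0 := Nat.cast_ne_zero.mpr (Nat.factorial_ne_zero _)
    push_cast
    field_simp
    ring_nf

theorem raney_succ_mul (k : ℕ) (x : K) :
    (k + 1) * (x + 2 * k + 1) * (x + 2 * k + 2) * raney (k + 1) x =
      (x + 3 * k) * (x + 3 * k + 1) * (x + 3 * k + 2) * raney k x := by
  cases k with
  | zero =>
    simp only [raney_succ, raney_zero, ascPochhammer_zero, eval_one]
    push_cast
    ring
  | succ k =>
    have key : ∀ z : K, z * (z + 1) * (ascPochhammer K (k + 1)).eval (z + 2) =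
        (ascPochhammer K k).eval z * ((z + k) * (z + k + 1) * (z + k + 2)) := by
      intro z
      have h := ascPochhammer_eval_add 2 (k + 1) z
      rw [show 2 + (k + 1) = k + 3 by ring, ascPochhammer_eval_add k 3,
        ascPochhammer_eval_eq_prod_range 2, ascPochhammer_eval_eq_prod_range 3] at h
      simp only [prod_range_succ, prod_range_zero] at h
      push_cast at h
      linear_combination -h
    have hf : ((k + 1).factorial : K) ≠ 0 := Nat.cast_ne_zero.mpr (Nat.factorial_ne_zero _)
    have e : x + ((2 * (k + 1) + 3 : ℕ) : K) = x + ((2 * k + 3 : ℕ) : K) + 2 := by push_cast; ring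
    rw [raney_succ, raney_succ, e, Nat.factorial_succ (k + 1)]
    have key := key (x + ((2 * k + 3 : ℕ) : K))
    generalize (ascPochhammer K k).eval (x + ((2 * k + 3 : ℕ) : K)) = p at key ⊢
    generalize (ascPochhammer K (k + 1)).eval (x + ((2 * k + 3 : ℕ) : K) + 2) = q at key ⊢
    have hk : ((k + 1 + 1 : ℕ) : K) ≠ 0 := Nat.cast_ne_zero.mpr (Nat.succ_ne_zero _)
    push_cast at key hk ⊢
    field_simp
    linear_combination x * key

theorem raney_add_natCast (n : ℕ)
    (ih : ∀ x y : K, raney n (x + y) = ∑ p ∈ antidiagonal n, raney p.1 x * raney p.2 y)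
    (m : ℕ) (y : K) :
    raney (n + 1) (m + y) = ∑ p ∈ antidiagonal (n + 1), raney p.1 (m : K) * raney p.2 y := by
  induction m with
  | zero => simp [Nat.sum_antidiagonal_succ]
  | succ m ihm =>
    have shift : ∀ x : K, ∑ p ∈ antidiagonal (n + 1), raney p.1 x * raney p.2 y =
        raney (n + 1) y + ∑ p ∈ antidiagonal n, raney (p.1 + 1) x * raney p.2 y := by
      intro x
      simp [Nat.sum_antidiagonal_succ]
    calc raney (n + 1) ((m + 1 : ℕ) + y)
        = raney (n + 1) (m + y) + raney n (m + 3 + y) := by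
          rw [show ((m + 1 : ℕ) : K) + y = m + y + 1 by push_cast; ring, raney_pascal]
          ring_nf
      _ = raney (n + 1) y + ∑ p ∈ antidiagonal n,
            (raney (p.1 + 1) (m : K) + raney p.1 ((m : K) + 3)) * raney p.2 y := by
          rw [ihm, ih, shift, add_assoc, ← sum_add_distrib]
          simp only [add_mul]
      _ = _ := by
          rw [shift]
          push_cast
          simp only [raney_pascal]

theorem raney_add (n : ℕ) (x y : K) :
    raney n (x + y) = ∑ p ∈ antidiagonal n, raney p.1 x * raney p.2 y := by
  induction n generalizing x y with
  | zero => simp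
  | succ n ih =>
    choose P hP using fun k => exists_eval_eq_raney (K := K) k
    have hpoly : (P (n + 1)).comp (X + C y) =
        ∑ p ∈ antidiagonal (n + 1), P p.1 * C (raney p.2 y) := by
      refine eq_of_infinite_eval_eq _ _
        ((Set.infinite_range_of_injective Nat.cast_injective).mono ?_)
      rintro _ ⟨m, rfl⟩
      simp only [Set.mem_ofPred_eq, eval_comp, eval_add, eval_X, eval_C, eval_finsetSum, eval_mul,
        hP]
      exact raney_add_natCast n ih m y
    simpa [eval_comp, eval_finsetSum, hP] using congrArg (eval x) hpoly

end Raney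

theorem raney_nonneg {R : ℝ} (hR : 0 ≤ R) (k : ℕ) : 0 ≤ raney k R := by
  cases k with
  | zero => simp
  | succ k =>
    rw [raney_succ]
    have := ascPochhammer_pos k (R + (2 * k + 3 : ℕ)) (by positivity)
    positivity

theorem norm_raney_le {𝕜 : Type*} [RCLike 𝕜] {z : 𝕜} {R : ℝ} (hz : ‖z‖ ≤ R) (k : ℕ) :
    ‖raney k z‖ ≤ raney k R := by
  cases k with
  | zero => simp
  | succ k =>
    rw [raney_succ, raney_succ, norm_div, norm_mul, RCLike.norm_natCast]
    have hzc : ‖z + (2 * k + 3 : ℕ)‖ ≤ R + (2 * k + 3 : ℕ) :=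
      (norm_add_le _ _).trans (by rw [RCLike.norm_natCast]; linarith)
    gcongr
    · exact (norm_nonneg _).trans hz
    · exact norm_ascPochhammer_eval_le k hzc

theorem summable_of_raabe {f : ℕ → ℝ} (hf : ∀ n, 0 ≤ f n) {ε : ℝ} (hε : 0 < ε) (N : ℕ)
    (h : ∀ n ≥ N, (n + 1) * f (n + 1) ≤ (n - ε) * f n) : Summable f := by
  rw [← summable_nat_add_iff N]
  refine summable_of_sum_range_le (c := N * f N / ε) (fun n => hf _) fun m => ?_
  set g : ℕ → ℝ := fun i => ((i + N : ℕ) : ℝ) * f (i + N)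
  have step : ∀ i, ε * f (i + N) ≤ g i - g (i + 1) := by
    intro i
    have := h (i + N) (by omega)
    simp only [g, show i + 1 + N = i + N + 1 by omega]
    push_cast at this ⊢
    linarith
  have hgm : 0 ≤ g m := mul_nonneg (Nat.cast_nonneg _) (hf _)
  have : ε * ∑ i ∈ range m, f (i + N) ≤ g 0 := by
    calc ε * ∑ i ∈ range m, f (i + N) ≤ ∑ i ∈ range m, (g i - g (i + 1)) := by
          rw [mul_sum]; exact sum_le_sum fun i _ => step i
      _ = g 0 - g m := sum_range_sub' g m
      _ ≤ g 0 := by linarith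
  rw [le_div_iff₀ hε]
  simpa [g, mul_comm] using this

theorem raney_cubic_le {R : ℝ} (hR : 0 ≤ R) {n : ℝ} (hn : (R + 2) ^ 2 ≤ n) :
    4 * ((R + 3 * n) * (R + 3 * n + 1) * (R + 3 * n + 2)) ≤
      27 * (n - 1 / 4) * ((R + 2 * n + 1) * (R + 2 * n + 2)) := by
  obtain ⟨s, hs, rfl⟩ : ∃ s, 0 ≤ s ∧ n = (R + 2) ^ 2 + s := ⟨n - (R + 2) ^ 2, by linarith, by ring⟩
  nlinarith [mul_nonneg hR hs, mul_nonneg (mul_nonneg hR hR) hs, mul_nonneg hs hs,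
    mul_nonneg (mul_nonneg hR hR) hR, mul_nonneg (mul_nonneg hR hR) (mul_nonneg hR hR)]

theorem summable_raney_mul_pow {R : ℝ} (hR : 0 ≤ R) :
    Summable fun k => raney k R * (4 / 27 : ℝ) ^ k := by
  refine summable_of_raabe (fun k => mul_nonneg (raney_nonneg hR k) (by positivity))
    (by norm_num : (0 : ℝ) < 1 / 4) ⌈(R + 2) ^ 2⌉₊ fun n hn => ?_
  have hcubic := raney_cubic_le hR ((Nat.ceil_le.mp hn))
  have hrec := raney_succ_mul n R
  have hD : 0 < (R + 2 * n + 1) * (R + 2 * n + 2) := by positivity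
  have hM : 0 ≤ raney n R * (4 / 27 : ℝ) ^ n := mul_nonneg (raney_nonneg hR n) (by positivity)
  refine le_of_mul_le_mul_right ?_ hD
  calc (n + 1) * (raney (n + 1) R * (4 / 27) ^ (n + 1)) * ((R + 2 * n + 1) * (R + 2 * n + 2))
      = 4 / 27 * ((R + 3 * n) * (R + 3 * n + 1) * (R + 3 * n + 2)) *
          (raney n R * (4 / 27) ^ n) := by
        rw [pow_succ]; linear_combination (4 / 27 * (4 / 27) ^ n) * hrec
    _ ≤ (n - 1 / 4) * ((R + 2 * n + 1) * (R + 2 * n + 2)) * (raney n R * (4 / 27) ^ n) := by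
        exact mul_le_mul_of_nonneg_right (by linarith) hM
    _ = _ := by ring

noncomputable def raneySeries (x : ℂ) : ℂ := ∑' k, raney k x * (4 / 27 : ℂ) ^ k

theorem norm_raney_mul_pow_le {x : ℂ} {R : ℝ} (hx : ‖x‖ ≤ R) (k : ℕ) :
    ‖raney k x * (4 / 27 : ℂ) ^ k‖ ≤ raney k R * (4 / 27 : ℝ) ^ k := by
  rw [norm_mul, norm_pow, show ‖(4 / 27 : ℂ)‖ = 4 / 27 by norm_num]
  exact mul_le_mul_of_nonneg_right (norm_raney_le hx k) (by positivity)

theorem summable_norm_raney_mul_pow (x : ℂ) :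
    Summable fun k => ‖raney k x * (4 / 27 : ℂ) ^ k‖ :=
  (summable_raney_mul_pow (norm_nonneg x)).of_nonneg_of_le (fun _ => norm_nonneg _)
    (norm_raney_mul_pow_le le_rfl)

theorem raneySeries_add (x y : ℂ) : raneySeries (x + y) = raneySeries x * raneySeries y := by
  rw [raneySeries, raneySeries, raneySeries, tsum_mul_tsum_eq_tsum_sum_antidiagonal_of_summable_norm
    (summable_norm_raney_mul_pow x) (summable_norm_raney_mul_pow y)]
  refine tsum_congr fun n => ?_
  rw [raney_add, sum_mul]
  refine sum_congr rfl fun p hp => ?_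
  rw [← mem_antidiagonal.mp hp, pow_add]
  ring

theorem raneySeries_zero : raneySeries 0 = 1 := by
  rw [raneySeries, tsum_eq_single 0 fun k hk => ?_]
  · simp
  · obtain ⟨k, rfl⟩ := Nat.exists_eq_succ_of_ne_zero hk
    simp

theorem raneySeries_natCast_mul (n : ℕ) (x : ℂ) : raneySeries (n * x) = raneySeries x ^ n := by
  induction n with
  | zero => simp [raneySeries_zero]
  | succ n ih => rw [Nat.cast_succ, add_one_mul, raneySeries_add, ih, pow_succ]

theorem differentiable_raneySeries : Differentiable ℂ raneySeries := by
  intro x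
  have hR : 0 ≤ ‖x‖ + 1 := by positivity
  have hterm (k : ℕ) : Differentiable ℂ fun z : ℂ => raney k z * (4 / 27 : ℂ) ^ k := by
    obtain ⟨p, hp⟩ := exists_eval_eq_raney (K := ℂ) k
    simp only [← hp]
    exact p.differentiable.mul_const _
  refine (differentiableOn_tsum_of_summable_norm (summable_raney_mul_pow hR)
    (fun k => (hterm k).differentiableOn) Metric.isOpen_ball fun k z hz => ?_).differentiableAt
      (Metric.isOpen_ball.mem_nhds (by simp : x ∈ Metric.ball 0 (‖x‖ + 1)))
  exact norm_raney_mul_pow_le (mem_ball_zero_iff.mp hz).le k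

theorem exists_raneySeries_ofReal_eq {t : ℝ} (ht : 0 ≤ t) :
    ∃ r : ℝ, 1 ≤ r ∧ raneySeries t = r := by
  have hs := summable_raney_mul_pow ht
  have hle : 1 ≤ ∑' k, raney k t * (4 / 27 : ℝ) ^ k := by
    simpa using hs.le_tsum 0 fun k _ => mul_nonneg (raney_nonneg ht k) (by positivity)
  refine ⟨_, hle, ?_⟩
  rw [raneySeries, Complex.ofReal_tsum]
  refine tsum_congr fun k => ?_
  have := map_raney Complex.ofRealHom k t
  rw [Complex.ofRealHom_eq_coe] at this
  rw [Complex.ofReal_mul, this]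
  norm_num

theorem raneySeries_one : raneySeries 1 = 3 / 2 := by
  have hshift : raneySeries 1 = 1 + 4 / 27 * raneySeries 3 := by
    rw [raneySeries, (summable_norm_raney_mul_pow 1).of_norm.tsum_eq_zero_add, raneySeries,
      ← tsum_mul_left]
    congr 1
    · simp
    · refine tsum_congr fun k => ?_
      have := raney_pascal k (0 : ℂ)
      rw [zero_add, zero_add, raney_succ_zero, zero_add] at this
      rw [this, pow_succ]
      ring
  have hcube : raneySeries 3 = raneySeries 1 ^ 3 := by
    rw [← raneySeries_natCast_mul]; norm_num
  obtain ⟨r, hr, hr1⟩ := exists_raneySeries_ofReal_eq zero_le_one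
  rw [Complex.ofReal_one] at hr1
  have hroot : (2 * raneySeries 1 - 3) ^ 2 * (raneySeries 1 + 3) = 0 := by
    linear_combination -27 * hshift - 4 * hcube
  have hne : raneySeries 1 + 3 ≠ 0 := by
    rw [hr1]; exact_mod_cast (by linarith : r + 3 ≠ 0)
  linear_combination (exp := 2) (mul_eq_zero.mp hroot).resolve_right hne / 4

theorem raneySeries_one_div_succ (n : ℕ) :
    raneySeries ((1 / (n + 1) : ℝ) : ℂ) = (3 / 2 : ℂ) ^ ((1 / (n + 1) : ℝ) : ℂ) := by
  obtain ⟨r, hr, hrs⟩ := exists_raneySeries_ofReal_eq (by positivity : (0 : ℝ) ≤ 1 / (n + 1))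
  have hpow : r ^ (n + 1) = 3 / 2 := by
    have h := raneySeries_natCast_mul (n + 1) ((1 / (n + 1) : ℝ) : ℂ)
    rw [hrs, show ((n + 1 : ℕ) : ℂ) * ((1 / (n + 1) : ℝ) : ℂ) = 1 by push_cast; field_simp,
      raneySeries_one] at h
    exact Complex.ofReal_injective (by push_cast; exact h.symm)
  have hroot : ((3 / 2 : ℝ) ^ (1 / (n + 1) : ℝ)) ^ (n + 1) = 3 / 2 := by
    simpa using Real.rpow_inv_natCast_pow (by norm_num : (0 : ℝ) ≤ 3 / 2) n.succ_ne_zero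
  rw [hrs, (pow_left_inj₀ (by linarith) (by positivity) n.succ_ne_zero).mp
    (hpow.trans hroot.symm), Complex.ofReal_cpow (by norm_num)]
  norm_num

theorem raneySeries_eq_cpow : raneySeries = fun x => (3 / 2 : ℂ) ^ x := by
  have hcpow : Differentiable ℂ fun x : ℂ => (3 / 2 : ℂ) ^ x :=
    differentiable_id.const_cpow (.inl (by norm_num))
  refine (differentiable_raneySeries.differentiableOn.analyticOnNhd isOpen_univ).eq_of_frequently_eq
    (hcpow.differentiableOn.analyticOnNhd isOpen_univ) (z₀ := 0) ?_
  have hlim : Tendsto (fun n : ℕ => ((1 / (n + 1) : ℝ) : ℂ)) atTop (𝓝[≠] 0) :=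
    tendsto_nhdsWithin_of_tendsto_nhds_of_eventually_within _
      (by simpa only [Function.comp_def, Complex.ofReal_zero] using
        (Complex.continuous_ofReal.tendsto 0).comp tendsto_one_div_add_atTop_nhds_zero_nat)
      (Eventually.of_forall fun n => by
        simp only [Set.mem_compl_iff, Set.mem_singleton_iff, Complex.ofReal_eq_zero]; positivity)
  exact hlim.frequently (Frequently.of_forall raneySeries_one_div_succ)

theorem NotNonposInt.ascPochhammer_eval_ne_zero {c : ℂ} (hc : NotNonposInt c) (k : ℕ) :
    (ascPochhammer ℂ k).eval c ≠ 0 := by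
  rw [Ne, ascPochhammer_eval_eq_zero_iff]
  rintro ⟨j, -, hj⟩
  exact hc j (by rw [hj, neg_neg])

theorem hyp3F2_term_eq_raney {a : ℂ} (h1 : NotNonposInt (3 * a))
    (h2 : NotNonposInt (3 * a + 1 / 2)) (k : ℕ) :
    (ascPochhammer ℂ k).eval (2 * a) * (ascPochhammer ℂ k).eval (2 * a - 1 / 3) *
        (ascPochhammer ℂ k).eval (2 * a + 1 / 3) /
      ((ascPochhammer ℂ k).eval (3 * a) * (ascPochhammer ℂ k).eval (3 * a + 1 / 2) * k.factorial) =
      raney k (6 * a - 1) * (4 / 27) ^ k := by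
  have hnum : (ascPochhammer ℂ (3 * k)).eval (6 * a - 1) = 27 ^ k *
      ((ascPochhammer ℂ k).eval (2 * a) * (ascPochhammer ℂ k).eval (2 * a - 1 / 3) *
        (ascPochhammer ℂ k).eval (2 * a + 1 / 3)) := by
    rw [show 6 * a - 1 = ((3 : ℕ) : ℂ) * (2 * a - 1 / 3) by push_cast; ring,
      ascPochhammer_eval_natCast_mul, pow_mul]
    simp only [prod_range_succ, prod_range_zero]
    push_cast
    ring_nf
  have hden : (ascPochhammer ℂ (2 * k)).eval (6 * a - 1 + 1) = 4 ^ k *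
      ((ascPochhammer ℂ k).eval (3 * a) * (ascPochhammer ℂ k).eval (3 * a + 1 / 2)) := by
    rw [show 6 * a - 1 + 1 = ((2 : ℕ) : ℂ) * (3 * a) by push_cast; ring,
      ascPochhammer_eval_natCast_mul, pow_mul]
    simp only [prod_range_succ, prod_range_zero]
    norm_num
  have key := raney_mul_ascPochhammer k (6 * a - 1)
  rw [hnum, hden] at key
  have hD := mul_ne_zero (h1.ascPochhammer_eval_ne_zero k) (h2.ascPochhammer_eval_ne_zero k)
  have hf : (k.factorial : ℂ) ≠ 0 := Nat.cast_ne_zero.mpr (Nat.factorial_ne_zero k)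
  rw [div_eq_iff (mul_ne_zero hD hf)]
  calc _ = ((27 : ℂ) ^ k)⁻¹ * (27 ^ k * _) := (inv_mul_cancel_left₀ (by norm_num) _).symm
    _ = _ := by rw [← key, div_pow]; ring

theorem stmt13 (a : ℂ) (h1 : NotNonposInt (3*a)) (h2 : NotNonposInt (3*a + 1/2)) :
    hyp3F2 (2*a) (2*a - 1/3) (2*a + 1/3) (3*a) (3*a + 1/2) =
      ((3 : ℂ)/2)^(6*a - 1) := by
  have hseries : hyp3F2 (2*a) (2*a - 1/3) (2*a + 1/3) (3*a) (3*a + 1/2) = raneySeries (6*a - 1) :=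
    tsum_congr (hyp3F2_term_eq_raney h1 h2)
  rw [hseries, raneySeries_eq_cpow]
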